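/- arXiv:2403.01159 — 4 statements merged into one kernel-verified Lean document; each statement's English description precedes it below -/
import Mathlib

section
/- The distinguished boundary bΓ₂ = {(z₁+z₂, z₁z₂) : z₁, z₂ ∈ 𝕋} of the symmetrized bidisc equals the set {(s,p) ∈ ℂ² : |s| ≤ 2, s = s̄·p, |p| = 1}. -/
/-!
If `|z₁| = |z₂| = 1` then `conj z₁ = z₁⁻¹`, so `conj (z₁ + z₂) * z₁ z₂ = z₂ + z₁`.
Conversely, write `p = w²` with `|w| = 1`; the relation `s = s̄ p` says exactly that `s w⁻¹` is a
real number `r`, and `|r| = |s| ≤ 2`. Choosing a unit `ζ` with `2 Re ζ = r`, the points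
`z₁ = w ζ` and `z₂ = w ζ̄` lie on the circle and have sum `w r = s` and product `w² = p`.
-/

open Complex ComplexConjugate

namespace Complex

theorem conj_mul_self_of_norm_eq_one {z : ℂ} (hz : ‖z‖ = 1) : conj z * z = 1 := by
  simp [conj_mul', hz]

theorem add_eq_conj_add_mul_mul {z₁ z₂ : ℂ} (h₁ : ‖z₁‖ = 1) (h₂ : ‖z₂‖ = 1) :
    z₁ + z₂ = conj (z₁ + z₂) * (z₁ * z₂) := by
  calc z₁ + z₂ = (conj z₁ * z₁) * z₂ + (conj z₂ * z₂) * z₁ := by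
        rw [conj_mul_self_of_norm_eq_one h₁, conj_mul_self_of_norm_eq_one h₂]; ring
    _ = conj (z₁ + z₂) * (z₁ * z₂) := by rw [map_add]; ring

theorem exists_norm_eq_one_sq_eq {p : ℂ} (hp : ‖p‖ = 1) : ∃ w : ℂ, ‖w‖ = 1 ∧ w ^ 2 = p := by
  obtain ⟨w, hw⟩ := IsAlgClosed.exists_pow_nat_eq p two_pos
  refine ⟨w, ?_, hw⟩
  have : ‖w‖ ^ 2 = 1 := by rw [← norm_pow, hw, hp]
  exact (pow_eq_one_iff_of_nonneg (norm_nonneg w) two_ne_zero).mp this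

theorem exists_real_mul_eq_of_eq_conj_mul_sq {s w : ℂ} (hw : ‖w‖ = 1)
    (hs : s = conj s * w ^ 2) : ∃ r : ℝ, s = r * w := by
  have hw₀ : w ≠ 0 := norm_ne_zero_iff.mp (by rw [hw]; exact one_ne_zero)
  have hreal : conj (s * conj w) = s * conj w := by
    calc conj (s * conj w) = conj s * w * (conj w * w) := by
          rw [conj_mul_self_of_norm_eq_one hw, map_mul, conj_conj, mul_one]
      _ = conj s * w ^ 2 * conj w := by ring
      _ = s * conj w := by rw [← hs]
  refine ⟨(s * conj w).re, ?_⟩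
  rw [conj_eq_iff_re.mp hreal, ← inv_eq_conj hw, inv_mul_cancel_right₀ hw₀]

theorem exists_norm_eq_one_add_conj_eq {r : ℝ} (hr : |r| ≤ 2) :
    ∃ ζ : ℂ, ‖ζ‖ = 1 ∧ ζ + conj ζ = r := by
  obtain ⟨hr₁, hr₂⟩ := abs_le.mp hr
  refine ⟨exp (Real.arccos (r / 2) * I), norm_exp_ofReal_mul_I _, ?_⟩
  rw [add_conj, exp_ofReal_mul_I_re, Real.cos_arccos (by linarith) (by linarith)]
  push_cast
  ring

end Complex

/-- The distinguished boundary of the symmetrized bidisc: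
`{(z₁+z₂, z₁z₂) : |z₁| = |z₂| = 1} = {(s,p) : |s| ≤ 2, s = s̄ p, |p| = 1}`. -/
theorem bGamma2_characterization :
    {x : ℂ × ℂ | ∃ z₁ z₂ : ℂ, ‖z₁‖ = 1 ∧ ‖z₂‖ = 1 ∧
        x = (z₁ + z₂, z₁ * z₂)} =
      {x : ℂ × ℂ | ‖x.1‖ ≤ 2 ∧ x.1 = starRingEnd ℂ x.1 * x.2 ∧
        ‖x.2‖ = 1} := by
  ext ⟨s, p⟩
  simp only [Set.mem_ofPred_eq, Prod.mk.injEq]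
  constructor
  · rintro ⟨z₁, z₂, h₁, h₂, rfl, rfl⟩
    refine ⟨(norm_add_le _ _).trans (by norm_num [h₁, h₂]), add_eq_conj_add_mul_mul h₁ h₂, ?_⟩
    rw [norm_mul, h₁, h₂, one_mul]
  · rintro ⟨hs, hsp, hp⟩
    obtain ⟨w, hw, rfl⟩ := exists_norm_eq_one_sq_eq hp
    obtain ⟨r, rfl⟩ := exists_real_mul_eq_of_eq_conj_mul_sq hw hsp
    have hr : |r| ≤ 2 := by simpa [hw] using hs
    obtain ⟨ζ, hζ, hζr⟩ := exists_norm_eq_one_add_conj_eq hr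
    refine ⟨w * ζ, w * conj ζ, by simp [hw, hζ], by simp [hw, hζ], ?_, ?_⟩
    · rw [← hζr]; ring
    · linear_combination (-w ^ 2) * conj_mul_self_of_norm_eq_one hζ
end

section
/- The distinguished boundary of the symmetrized bidisc is the union of the orbits of (0,1) and (2,1) under the automorphism group: bΓ₂ = { τ_v(0,1) : v ∈ Aut(𝔻) } ∪ { τ_v(2,1) : v ∈ Aut(𝔻) }. -/
/-!
A point of `bΓ₂` is `(z₁ + z₂, z₁ z₂)` with `z₁, z₂ ∈ 𝕋`. If `z₁ = z₂` it is `τ_v(2, 1)` for the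
rotation `v(z) = z₁ z`. Otherwise it suffices to find `v ∈ Aut 𝔻` with `v(i) = z₁`, `v(-i) = z₂`.
For a real centre `t ∈ (-1, 1)` and `c = (t - i)/(t + i)` one has `v(i) = i ω c` and
`v(-i) = -i ω / c`, so the ratio `v(i)/v(-i) = -c²` only depends on `c`; as `t` runs over
`(-1, 1)` the Cayley transform `c` runs over the left half of the circle, whose squares are all of
`𝕋 ∖ {-1}`. Choosing `c` with `c² = -z₁/z₂` and then the rotation `ω` gives `v`.
-/

open Complex

/-- Möbius automorphism of the unit disc. -/
noncomputable def discAut (ω α z : ℂ) : ℂ := ω * (z - α) / (starRingEnd ℂ α * z - 1)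

lemma norm_conj_mul_sub_one {α z : ℂ} (hz : ‖z‖ = 1) :
    ‖starRingEnd ℂ α * z - 1‖ = ‖z - α‖ := by
  have hzz : starRingEnd ℂ z * z = 1 := by
    rw [← normSq_eq_conj_mul_self, normSq_eq_norm_sq, hz, one_pow, ofReal_one]
  calc ‖starRingEnd ℂ α * z - 1‖ = ‖z * starRingEnd ℂ (α - z)‖ := by
        rw [map_sub]; congr 1; linear_combination hzz
    _ = ‖z - α‖ := by rw [norm_mul, hz, one_mul, norm_conj, norm_sub_rev]

lemma norm_discAut {ω α z : ℂ} (hω : ‖ω‖ = 1) (hα : ‖α‖ < 1) (hz : ‖z‖ = 1) :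
    ‖discAut ω α z‖ = 1 := by
  have hzα : ‖z - α‖ ≠ 0 := norm_ne_zero_iff.2 <| sub_ne_zero.2 fun h ↦ by
    rw [h] at hz; exact hα.ne hz
  rw [discAut, norm_div, norm_mul, hω, one_mul, norm_conj_mul_sub_one hz, div_self hzα]

lemma discAut_zero_one (ω : ℂ) : discAut ω 0 1 = -ω := by
  simp [discAut, div_neg]

lemma ofReal_add_I_ne_zero (t : ℝ) : (t : ℂ) + I ≠ 0 := by
  intro h; simpa using congrArg im h

lemma ofReal_sub_I_ne_zero (t : ℝ) : (t : ℂ) - I ≠ 0 := by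
  intro h; simpa using congrArg im h

lemma discAut_ofReal_I (ω : ℂ) (t : ℝ) :
    discAut ω t I = I * ω * ((t - I) / (t + I)) := by
  have hden : (t : ℂ) * I - 1 = I * (t + I) := by linear_combination -I_sq
  rw [discAut, conj_ofReal, hden]
  field_simp [ofReal_add_I_ne_zero t, I_ne_zero]
  linear_combination ω * (I - t) * I_sq

lemma discAut_ofReal_neg_I (ω : ℂ) (t : ℝ) :
    discAut ω t (-I) = -I * ω / ((t - I) / (t + I)) := by
  have hden : (t : ℂ) * -I - 1 = -I * (t - I) := by linear_combination -I_sq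
  rw [discAut, conj_ofReal, hden]
  field_simp [ofReal_add_I_ne_zero t, ofReal_sub_I_ne_zero t, I_ne_zero]
  linear_combination ω * (t + I) * I_sq

lemma exists_abs_lt_one_cayley_eq {w : ℂ} (hw : ‖w‖ = 1) (hre : w.re < 0) :
    ∃ t : ℝ, |t| < 1 ∧ (t - I) / (t + I) = w := by
  have hnorm : w.re ^ 2 + w.im ^ 2 = 1 := by
    have h := normSq_eq_norm_sq w
    rw [hw, normSq_apply] at h
    linear_combination h
  have hpos : 0 < 1 - w.re := by linarith
  set t := -w.im / (1 - w.re) with ht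
  have ht_mul : t * (1 - w.re) = -w.im := by
    rw [ht]; field_simp
  have him_mul : w.im * t = -(1 + w.re) := by
    rw [ht]; field_simp; linear_combination -hnorm
  refine ⟨t, ?_, ?_⟩
  · rw [ht, abs_div, abs_of_pos hpos, div_lt_one hpos, abs_lt]
    constructor <;> nlinarith
  · rw [div_eq_iff (ofReal_add_I_ne_zero _)]
    conv_rhs => rw [← re_add_im w]
    have h₁ := congrArg ofReal ht_mul
    have h₂ := congrArg ofReal him_mul
    push_cast at h₁ h₂
    linear_combination h₁ - I * h₂ - w.im * I_sq

lemma exists_sq_eq_re_neg_of_mem_slitPlane {q : ℂ} (hq : q ∈ slitPlane) :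
    ∃ w : ℂ, w.re < 0 ∧ w ^ 2 = q := by
  obtain ⟨w, hw⟩ := IsAlgClosed.exists_pow_nat_eq q two_pos
  rcases lt_trichotomy w.re 0 with h | h | h
  · exact ⟨w, h, hw⟩
  · rw [← hw, mem_slitPlane_iff] at hq
    simp only [sq, mul_re, mul_im, h, zero_mul, mul_zero, zero_sub, add_zero, ne_eq,
      not_true_eq_false, or_false] at hq
    nlinarith [hq]
  · exact ⟨-w, by simpa using h, by rw [neg_sq, hw]⟩

lemma neg_div_mem_slitPlane {z₁ z₂ : ℂ} (h₁ : ‖z₁‖ = 1) (h₂ : ‖z₂‖ = 1) (hne : z₁ ≠ z₂) :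
    -z₁ / z₂ ∈ slitPlane := by
  have hz₂ : z₂ ≠ 0 := norm_ne_zero_iff.1 (by rw [h₂]; exact one_ne_zero)
  refine (subset_slitPlane_iff_of_subset_sphere (r := 1) (s := {-z₁ / z₂}) ?_).2 ?_ rfl
  · simp [h₁, h₂]
  · intro h
    rw [Set.mem_singleton_iff, ofReal_one, eq_comm, neg_div, neg_inj, div_eq_one_iff_eq hz₂] at h
    exact hne h

lemma exists_discAut_I_eq_and_neg_I_eq {z₁ z₂ : ℂ} (h₁ : ‖z₁‖ = 1) (h₂ : ‖z₂‖ = 1)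
    (hne : z₁ ≠ z₂) :
    ∃ ω α : ℂ, ‖ω‖ = 1 ∧ ‖α‖ < 1 ∧ discAut ω α I = z₁ ∧ discAut ω α (-I) = z₂ := by
  have hz₂ : z₂ ≠ 0 := norm_ne_zero_iff.1 (by rw [h₂]; exact one_ne_zero)
  obtain ⟨c, hc_re, hc_sq⟩ :=
    exists_sq_eq_re_neg_of_mem_slitPlane (neg_div_mem_slitPlane h₁ h₂ hne)
  have hc : ‖c‖ = 1 := by
    have h := congrArg norm hc_sq
    rw [norm_pow, norm_div, norm_neg, h₁, h₂, div_one] at h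
    exact (pow_eq_one_iff_of_nonneg (norm_nonneg c) two_ne_zero).1 h
  have hc₀ : c ≠ 0 := norm_ne_zero_iff.1 (by rw [hc]; exact one_ne_zero)
  have hc_sq' : c ^ 2 * z₂ = -z₁ := by rw [hc_sq, div_mul_cancel₀ _ hz₂]
  obtain ⟨t, ht, hct⟩ := exists_abs_lt_one_cayley_eq hc hc_re
  refine ⟨-I * z₁ / c, t, by simp [h₁, hc], by simpa using ht, ?_, ?_⟩
  · rw [discAut_ofReal_I, hct]
    field_simp
    linear_combination -z₁ * I_sq
  · rw [discAut_ofReal_neg_I, hct]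
    field_simp
    linear_combination z₁ * I_sq - hc_sq'

/-- The distinguished boundary of the symmetrized bidisc is the union of the orbits
of `(0,1)` and `(2,1)` under the automorphism group, where
`τ_v(0,1) = (v(i)+v(-i), v(i)v(-i))` and `τ_v(2,1) = (2v(1), v(1)²)`. -/
theorem bGamma2_eq_union_of_orbits :
    {x : ℂ × ℂ | ∃ z₁ z₂ : ℂ, ‖z₁‖ = 1 ∧ ‖z₂‖ = 1 ∧
        x = (z₁ + z₂, z₁ * z₂)} =
      {x : ℂ × ℂ | ∃ ω α : ℂ, ‖ω‖ = 1 ∧ ‖α‖ < 1 ∧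
          x = (discAut ω α Complex.I + discAut ω α (-Complex.I),
               discAut ω α Complex.I * discAut ω α (-Complex.I))} ∪
      {x : ℂ × ℂ | ∃ ω α : ℂ, ‖ω‖ = 1 ∧ ‖α‖ < 1 ∧
          x = (2 * discAut ω α 1, (discAut ω α 1) ^ 2)} := by
  ext x
  simp only [Set.mem_ofPred_eq, Set.mem_union]
  constructor
  · rintro ⟨z₁, z₂, h₁, h₂, rfl⟩
    rcases eq_or_ne z₁ z₂ with rfl | hne
    · refine Or.inr ⟨-z₁, 0, by rwa [norm_neg], by simp, ?_⟩
      rw [discAut_zero_one, neg_neg, two_mul, sq]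
    · obtain ⟨ω, α, hω, hα, hI, hnegI⟩ := exists_discAut_I_eq_and_neg_I_eq h₁ h₂ hne
      exact Or.inl ⟨ω, α, hω, hα, by rw [hI, hnegI]⟩
  · rintro (⟨ω, α, hω, hα, rfl⟩ | ⟨ω, α, hω, hα, rfl⟩)
    · exact ⟨_, _, norm_discAut hω hα (by simp), norm_discAut hω hα (by simp), rfl⟩
    · refine ⟨_, _, norm_discAut hω hα norm_one, norm_discAut hω hα norm_one, ?_⟩
      rw [two_mul, sq]
end

section
/- Given points z₁, …, zₙ on the unit circle and distinct points μ₁, …, μₙ on the unit circle, there exists a finite Blaschke product B with B(μⱼ) = zⱼ for all 1 ≤ j ≤ n. -/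
open Complex

/-- `B : ℂ → ℂ` is a finite Blaschke product:
`B(z) = ω ∏ⱼ (z - aⱼ)/(1 - āⱼ z)` with `|ω| = 1` and `|aⱼ| < 1`. -/
def IsFiniteBlaschke (B : ℂ → ℂ) : Prop :=
  ∃ (m : ℕ) (ω : ℂ) (a : Fin m → ℂ), ‖ω‖ = 1 ∧ (∀ k, ‖a k‖ < 1) ∧
    ∀ z : ℂ, B z = ω * ∏ k, (z - a k) / (1 - starRingEnd ℂ (a k) * z)

/-!
Induct on the number of nodes. Having matched the first values by `B`, multiply by a finite
Blaschke product `G` that is `1` at the old nodes and `z / B μ` at the new node `μ`, where `z` is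
the value prescribed there. For `G` take
the Cayley transform `(F - 1) / (F + 1)` of a Herglotz sum `F z = ∑ c p * (p + z) / (p - z)` with
positive weights and poles at the old nodes and at one extra point `v` of the circle: `G = 1` at
the poles, `F` is purely imaginary on the circle, and `v` is chosen so that `F μ` is the Cayley
preimage of the required value.

Clearing denominators, `G = (N - D) / (N + D)` with polynomials `N`, `D`. Since `Re F ≥ 0` on the
closed disc, `Q = N + D` has no zeros there, and on the circle `N - D` is a unimodular multiple of
the reflection `z ^ d * conj (Q z)`; hence `G` is a finite Blaschke product whose zeros are the
reflections `1 / conj q` of the roots `q` of `Q`.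
-/

open Finset Polynomial Lagrange

theorem mul_conj_of_norm_eq_one {z : ℂ} (hz : ‖z‖ = 1) : z * starRingEnd ℂ z = 1 := by
  simp [mul_conj', hz]

theorem mul_conj_sub_of_norm_eq_one {z p : ℂ} (hz : ‖z‖ = 1) (hp : ‖p‖ = 1) :
    z * starRingEnd ℂ (z - p) = -starRingEnd ℂ p * (z - p) := by
  rw [map_sub]
  linear_combination mul_conj_of_norm_eq_one hz - mul_conj_of_norm_eq_one hp

theorem mul_conj_add_of_norm_eq_one {z p : ℂ} (hz : ‖z‖ = 1) (hp : ‖p‖ = 1) :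
    z * starRingEnd ℂ (z + p) = starRingEnd ℂ p * (z + p) := by
  rw [map_add]
  linear_combination mul_conj_of_norm_eq_one hz - mul_conj_of_norm_eq_one hp

theorem re_add_div_sub (a b : ℂ) :
    ((a + b) / (a - b)).re = (‖a‖ ^ 2 - ‖b‖ ^ 2) / ‖a - b‖ ^ 2 := by
  rw [div_re, ← add_div, ← normSq_eq_norm_sq, ← normSq_eq_norm_sq, ← normSq_eq_norm_sq]
  congr 1
  simp only [normSq_apply, add_re, sub_re, add_im, sub_im]
  ring

theorem norm_sub_div_one_sub_conj_mul {a z : ℂ} (ha : ‖a‖ < 1) (hz : ‖z‖ = 1) :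
    ‖(z - a) / (1 - starRingEnd ℂ a * z)‖ = 1 := by
  have hza : z - a ≠ 0 := fun h ↦ by rw [← sub_eq_zero.mp h] at ha; linarith
  have hden : 1 - starRingEnd ℂ a * z = z * starRingEnd ℂ (z - a) := by
    rw [map_sub]; linear_combination -mul_conj_of_norm_eq_one hz
  rw [hden, norm_div, norm_mul, hz, norm_conj, one_mul, div_self (norm_ne_zero_iff.mpr hza)]

namespace IsFiniteBlaschke

theorem const {ω : ℂ} (hω : ‖ω‖ = 1) : IsFiniteBlaschke fun _ ↦ ω :=
  ⟨0, ω, Fin.elim0, hω, fun k ↦ k.elim0, fun _ ↦ by simp⟩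

theorem id_pow (k : ℕ) : IsFiniteBlaschke fun z ↦ z ^ k :=
  ⟨k, 1, 0, norm_one, fun _ ↦ by simp, fun _ ↦ by simp⟩

theorem sub_div_one_sub_conj_mul {a : ℂ} (ha : ‖a‖ < 1) :
    IsFiniteBlaschke fun z ↦ (z - a) / (1 - starRingEnd ℂ a * z) :=
  ⟨1, 1, fun _ ↦ a, norm_one, fun _ ↦ ha, fun _ ↦ by simp⟩

theorem mul {B₁ B₂ : ℂ → ℂ} (h₁ : IsFiniteBlaschke B₁) (h₂ : IsFiniteBlaschke B₂) :
    IsFiniteBlaschke fun z ↦ B₁ z * B₂ z := by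
  obtain ⟨m₁, ω₁, a₁, hω₁, ha₁, hB₁⟩ := h₁
  obtain ⟨m₂, ω₂, a₂, hω₂, ha₂, hB₂⟩ := h₂
  refine ⟨m₁ + m₂, ω₁ * ω₂, Fin.append a₁ a₂, by simp [hω₁, hω₂],
    Fin.addCases (by simpa using ha₁) (by simpa using ha₂), fun z ↦ ?_⟩
  show B₁ z * B₂ z = _
  rw [hB₁, hB₂, Fin.prod_univ_add]
  simp only [Fin.append_left, Fin.append_right]
  ring

theorem norm_eq_one {B : ℂ → ℂ} (hB : IsFiniteBlaschke B) {z : ℂ}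
    (hz : ‖z‖ = 1) : ‖B z‖ = 1 := by
  obtain ⟨m, ω, a, hω, ha, hBz⟩ := hB
  rw [hBz, norm_mul, hω, one_mul, norm_prod]
  exact prod_eq_one fun k _ ↦ norm_sub_div_one_sub_conj_mul (ha k) hz

end IsFiniteBlaschke

theorem exists_isFiniteBlaschke_mul_sub_eq {q : ℂ} (hq : 1 < ‖q‖) :
    ∃ B, IsFiniteBlaschke B ∧ ∀ z : ℂ, ‖z‖ = 1 → B z * (z - q) = z * starRingEnd ℂ (z - q) := by
  have hq₀ : q ≠ 0 := norm_pos_iff.mp (one_pos.trans hq)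
  refine ⟨_, (IsFiniteBlaschke.const (ω := starRingEnd ℂ q / q) (by simp [hq₀])).mul
    (IsFiniteBlaschke.sub_div_one_sub_conj_mul (a := (starRingEnd ℂ q)⁻¹)
      (by simpa using inv_lt_one_of_one_lt₀ hq)), fun z hz ↦ ?_⟩
  have hzq : z - q ≠ 0 := fun h ↦ by rw [sub_eq_zero.mp h] at hz; linarith
  have hz₀ : z ≠ 0 := norm_pos_iff.mp (by rw [hz]; exact one_pos)
  have hq₀' : starRingEnd ℂ q ≠ 0 := by simpa using hq₀
  have hden : 1 - q⁻¹ * z = -(z - q) / q := by field_simp; ring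
  simp only [map_inv₀, conj_conj, hden, map_sub, ← inv_eq_conj hz]
  field_simp
  ring

theorem Multiset.exists_isFiniteBlaschke_mul_prod_eq (s : Multiset ℂ) (hs : ∀ q ∈ s, 1 < ‖q‖) :
    ∃ B, IsFiniteBlaschke B ∧ ∀ z : ℂ, ‖z‖ = 1 →
      B z * (s.map (z - ·)).prod = z ^ Multiset.card s * starRingEnd ℂ (s.map (z - ·)).prod := by
  induction s using Multiset.induction_on with
  | empty => exact ⟨_, IsFiniteBlaschke.const norm_one, by simp⟩
  | cons q s ih =>
    obtain ⟨B₁, hB₁, hB₁z⟩ := exists_isFiniteBlaschke_mul_sub_eq (hs q (s.mem_cons_self q))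
    obtain ⟨B, hB, hBz⟩ := ih fun p hp ↦ hs p (Multiset.mem_cons_of_mem hp)
    refine ⟨_, hB₁.mul hB, fun z hz ↦ ?_⟩
    simp only [Multiset.map_cons, Multiset.prod_cons, Multiset.card_cons, map_mul, pow_succ]
    linear_combination (B z * (s.map (z - ·)).prod) * hB₁z z hz +
      (z * starRingEnd ℂ (z - q)) * hBz z hz

theorem Polynomial.exists_isFiniteBlaschke_mul_eval_eq {Q : ℂ[X]} {d : ℕ} (hd : Q.natDegree ≤ d)
    (hQ : ∀ z : ℂ, ‖z‖ ≤ 1 → Q.eval z ≠ 0) :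
    ∃ B, IsFiniteBlaschke B ∧ ∀ z : ℂ, ‖z‖ = 1 →
      B z * Q.eval z = z ^ d * starRingEnd ℂ (Q.eval z) := by
  have hQ₀ : Q ≠ 0 := fun h ↦ hQ 0 (by simp) (by simp [h])
  have hlc : Q.leadingCoeff ≠ 0 := leadingCoeff_ne_zero.mpr hQ₀
  obtain ⟨B, hB, hBz⟩ := Q.roots.exists_isFiniteBlaschke_mul_prod_eq fun q hq ↦
    lt_of_not_ge fun h ↦ hQ q h (mem_roots'.mp hq).2
  refine ⟨_, (IsFiniteBlaschke.const (ω := starRingEnd ℂ Q.leadingCoeff / Q.leadingCoeff)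
    (by simp [hlc])).mul ((IsFiniteBlaschke.id_pow (d - Q.natDegree)).mul hB), fun z hz ↦ ?_⟩
  rw [(IsAlgClosed.splits Q).eval_eq_prod_roots, map_mul, ← pow_sub_mul_pow z hd,
    ← IsAlgClosed.card_roots_eq_natDegree]
  field_simp
  linear_combination (starRingEnd ℂ Q.leadingCoeff * z ^ (d - Q.roots.card)) * hBz z hz

theorem pow_card_mul_conj_eval_nodal {T : Finset ℂ} (hT : ∀ p ∈ T, ‖p‖ = 1) {z : ℂ}
    (hz : ‖z‖ = 1) :
    z ^ #T * starRingEnd ℂ ((nodal T id).eval z) =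
      (∏ p ∈ T, -starRingEnd ℂ p) * (nodal T id).eval z := by
  rw [eval_nodal, map_prod, ← prod_const, ← prod_mul_distrib, ← prod_mul_distrib]
  exact prod_congr rfl fun p hp ↦ mul_conj_sub_of_norm_eq_one hz (hT p hp)

section Herglotz

variable (S : Finset ℂ) (c : ℂ → ℝ)

noncomputable def herglotzSum (z : ℂ) : ℂ := ∑ p ∈ S, (c p : ℂ) * ((p + z) / (p - z))

noncomputable def herglotzNumerator : ℂ[X] :=
  -∑ p ∈ S, C (c p : ℂ) * ((X + C p) * nodal (S.erase p) id)

variable {S c}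

theorem eval_herglotzNumerator_of_notMem {z : ℂ} (hz : z ∉ S) :
    (herglotzNumerator S c).eval z = (nodal S id).eval z * herglotzSum S c z := by
  simp only [herglotzNumerator, herglotzSum, eval_neg, eval_finsetSum, mul_sum, ← sum_neg_distrib]
  refine sum_congr rfl fun p hp ↦ ?_
  have hpz : p - z ≠ 0 := sub_ne_zero.mpr fun h ↦ hz (h ▸ hp)
  rw [nodal_eq_mul_nodal_erase hp]
  simp only [eval_mul, eval_C, eval_add, eval_X, eval_sub, id]
  field_simp
  ring

theorem eval_herglotzNumerator_of_mem {p : ℂ} (hp : p ∈ S) :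
    (herglotzNumerator S c).eval p = -(c p * (2 * p) * (nodal (S.erase p) id).eval p) := by
  rw [herglotzNumerator, eval_neg, eval_finsetSum, sum_eq_single_of_mem p hp fun q _ hqp ↦ by
    have h₀ : (nodal (S.erase q) id).eval p = 0 :=
      eval_nodal_at_node (v := id) (mem_erase.mpr ⟨hqp.symm, hp⟩)
    rw [eval_mul, eval_mul, h₀, mul_zero, mul_zero]]
  simp only [eval_mul, eval_C, eval_add, eval_X]
  ring

theorem natDegree_herglotzNumerator_le : (herglotzNumerator S c).natDegree ≤ #S := by
  rw [herglotzNumerator, natDegree_neg]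
  refine natDegree_sum_le_of_forall_le _ _ fun p hp ↦ (natDegree_C_mul_le _ _).trans ?_
  refine natDegree_mul_le.trans ?_
  rw [natDegree_X_add_C, natDegree_nodal, add_comm, card_erase_add_one hp]

theorem re_herglotzSum_nonneg (hS : ∀ p ∈ S, ‖p‖ = 1) (hc : ∀ p ∈ S, 0 ≤ c p) {z : ℂ}
    (hz : ‖z‖ ≤ 1) : 0 ≤ (herglotzSum S c z).re := by
  rw [herglotzSum, re_sum]
  refine sum_nonneg fun p hp ↦ ?_
  rw [re_ofReal_mul, re_add_div_sub, hS p hp]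
  have : ‖z‖ ^ 2 ≤ 1 := pow_le_one₀ (norm_nonneg z) hz
  exact mul_nonneg (hc p hp) (div_nonneg (by linarith) (sq_nonneg _))

theorem re_herglotzSum_eq_zero (hS : ∀ p ∈ S, ‖p‖ = 1) {z : ℂ} (hz : ‖z‖ = 1) :
    (herglotzSum S c z).re = 0 := by
  rw [herglotzSum, re_sum]
  exact sum_eq_zero fun p hp ↦ by simp [re_add_div_sub, hS p hp, hz]

theorem eval_herglotzNumerator_add_nodal_ne_zero (hS : ∀ p ∈ S, ‖p‖ = 1) (hc : ∀ p ∈ S, 0 < c p)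
    {z : ℂ} (hz : ‖z‖ ≤ 1) : (herglotzNumerator S c + nodal S id).eval z ≠ 0 := by
  rw [eval_add]
  by_cases hzS : z ∈ S
  · have hz₀ : z ≠ 0 := norm_ne_zero_iff.mp (by rw [hS z hzS]; exact one_ne_zero)
    have hD : (nodal S id).eval z = 0 := eval_nodal_at_node (v := id) hzS
    rw [eval_herglotzNumerator_of_mem hzS, hD, add_zero, neg_ne_zero]
    refine mul_ne_zero (mul_ne_zero (by exact_mod_cast (hc z hzS).ne') (by simpa using hz₀)) ?_
    exact eval_nodal_not_at_node fun q hq ↦ (ne_of_mem_erase hq).symm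
  · have hF : herglotzSum S c z + 1 ≠ 0 := fun h ↦ by
      have := congrArg re h
      simp only [add_re, one_re, zero_re] at this
      linarith [re_herglotzSum_nonneg hS (fun p hp ↦ (hc p hp).le) hz]
    rw [eval_herglotzNumerator_of_notMem hzS, ← mul_add_one]
    exact mul_ne_zero (eval_nodal_not_at_node fun q hq h ↦ hzS (h ▸ hq)) hF

theorem pow_card_mul_conj_eval_herglotzNumerator (hS : ∀ p ∈ S, ‖p‖ = 1) {z : ℂ} (hz : ‖z‖ = 1) :
    z ^ #S * starRingEnd ℂ ((herglotzNumerator S c).eval z) =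
      -(∏ p ∈ S, -starRingEnd ℂ p) * (herglotzNumerator S c).eval z := by
  simp only [herglotzNumerator, eval_neg, eval_finsetSum, eval_mul, eval_C, eval_add, eval_X,
    map_neg, map_sum, map_mul, conj_ofReal, mul_neg, mul_sum]
  refine congrArg Neg.neg (sum_congr rfl fun p hp ↦ ?_)
  have hE := pow_card_mul_conj_eval_nodal (T := S.erase p)
    (fun q hq ↦ hS q (mem_of_mem_erase hq)) hz
  rw [← card_erase_add_one hp, pow_succ, ← mul_prod_erase S _ hp]
  linear_combination (c p * z ^ #(S.erase p) * starRingEnd ℂ ((nodal (S.erase p) id).eval z)) *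
      mul_conj_add_of_norm_eq_one hz (hS p hp) + (c p * starRingEnd ℂ p * (z + p)) * hE

theorem exists_isFiniteBlaschke_mul_eval_herglotz (hS : ∀ p ∈ S, ‖p‖ = 1)
    (hc : ∀ p ∈ S, 0 < c p) :
    ∃ G, IsFiniteBlaschke G ∧ ∀ z : ℂ, ‖z‖ = 1 →
      G z * (herglotzNumerator S c + nodal S id).eval z =
        (herglotzNumerator S c - nodal S id).eval z := by
  set κ := ∏ p ∈ S, -starRingEnd ℂ p
  have hκ : ‖κ‖ = 1 := by
    rw [norm_prod]; exact prod_eq_one fun p hp ↦ by simp [hS p hp]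
  obtain ⟨B, hB, hBz⟩ := exists_isFiniteBlaschke_mul_eval_eq
    (natDegree_add_le_of_degree_le natDegree_herglotzNumerator_le natDegree_nodal.le)
    fun z hz ↦ eval_herglotzNumerator_add_nodal_ne_zero hS hc hz
  refine ⟨_, (IsFiniteBlaschke.const (ω := -starRingEnd ℂ κ) (by simpa using hκ)).mul hB,
    fun z hz ↦ ?_⟩
  have hBz := hBz z hz
  rw [eval_add, map_add] at hBz
  rw [eval_add, eval_sub]
  linear_combination (-starRingEnd ℂ κ) * (hBz + pow_card_mul_conj_eval_herglotzNumerator hS hz +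
    pow_card_mul_conj_eval_nodal hS hz) +
    ((herglotzNumerator S c).eval z - (nodal S id).eval z) * mul_conj_of_norm_eq_one hκ

theorem exists_isFiniteBlaschke_eq_one_and_cayley_herglotzSum (hS : ∀ p ∈ S, ‖p‖ = 1)
    (hc : ∀ p ∈ S, 0 < c p) :
    ∃ G, IsFiniteBlaschke G ∧ (∀ p ∈ S, G p = 1) ∧ ∀ z : ℂ, ‖z‖ = 1 → z ∉ S →
      G z = (herglotzSum S c z - 1) / (herglotzSum S c z + 1) := by
  obtain ⟨G, hG, hGz⟩ := exists_isFiniteBlaschke_mul_eval_herglotz hS hc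
  refine ⟨G, hG, fun p hp ↦ ?_, fun z hz hzS ↦ ?_⟩
  · have hD : (nodal S id).eval p = 0 := eval_nodal_at_node (v := id) hp
    have hN := eval_herglotzNumerator_add_nodal_ne_zero hS hc (hS p hp).le
    have h := hGz p (hS p hp)
    rw [eval_add, hD, add_zero] at hN h
    rw [eval_sub, hD, sub_zero] at h
    exact mul_eq_right₀ hN |>.mp h
  · have hD : (nodal S id).eval z ≠ 0 := eval_nodal_not_at_node fun q hq h ↦ hzS (h ▸ hq)
    have hF : herglotzSum S c z + 1 ≠ 0 := fun h ↦ by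
      simpa [re_herglotzSum_eq_zero hS hz] using congrArg re h
    have h := hGz z hz
    rw [eval_add, eval_sub, eval_herglotzNumerator_of_notMem hzS] at h
    rw [eq_div_iff hF]
    exact mul_right_cancel₀ hD (by linear_combination h)

end Herglotz

theorem exists_norm_eq_one_add_div_sub_eq {μ τ : ℂ} (hμ : ‖μ‖ = 1) (hτ : τ.re = 0) :
    ∃ v, ‖v‖ = 1 ∧ v ≠ μ ∧ (v + μ) / (v - μ) = τ := by
  have hμ₀ : μ ≠ 0 := norm_ne_zero_iff.mp (by rw [hμ]; exact one_ne_zero)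
  have hτ₁ : τ - 1 ≠ 0 := fun h ↦ by simpa [hτ] using congrArg re h
  have hconj : starRingEnd ℂ τ = -τ := Complex.ext (by simp [hτ]) (by simp)
  have hnorm : ‖τ + 1‖ = ‖τ - 1‖ := by
    rw [← norm_conj, map_add, hconj, map_one, neg_add_eq_sub, norm_sub_rev]
  refine ⟨μ * (τ + 1) / (τ - 1), ?_, fun h ↦ ?_, ?_⟩
  · rw [norm_div, norm_mul, hμ, one_mul, hnorm, div_self (norm_ne_zero_iff.mpr hτ₁)]
  · rw [div_eq_iff hτ₁] at h
    exact hμ₀ (by linear_combination h / 2)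
  · field_simp
    ring

theorem exists_isFiniteBlaschke_eq_one_and_eq {S : Finset ℂ} (hS : ∀ p ∈ S, ‖p‖ = 1) {μ w : ℂ}
    (hμ : ‖μ‖ = 1) (hμS : μ ∉ S) (hw : ‖w‖ = 1) :
    ∃ G, IsFiniteBlaschke G ∧ (∀ p ∈ S, G p = 1) ∧ G μ = w := by
  rcases eq_or_ne w 1 with rfl | hw₁
  · exact ⟨_, IsFiniteBlaschke.const norm_one, fun _ _ ↦ rfl, rfl⟩
  set τ := (1 + w) / (1 - w)
  have hτ : τ.re = 0 := by simp [τ, re_add_div_sub, hw]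
  have hτw : (τ - 1) / (τ + 1) = w := by
    have : 1 - w ≠ 0 := sub_ne_zero.mpr hw₁.symm
    simp only [τ]
    field_simp
    ring
  obtain ⟨v, hv, hvμ, hvτ⟩ := exists_norm_eq_one_add_div_sub_eq (τ := τ - herglotzSum S 1 μ) hμ
    (by rw [sub_re, hτ, re_herglotzSum_eq_zero hS hμ, sub_zero])
  -- weight `1` on `S` and an extra `1` at `v`, whether or not `v ∈ S`
  set c : ℂ → ℝ := fun p ↦ (if p ∈ S then 1 else 0) + if p = v then 1 else 0
  have hF : herglotzSum (insert v S) c μ = τ := by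
    simp only [herglotzSum, c, Pi.one_apply, ofReal_add, apply_ite ((↑) : ℝ → ℂ), ofReal_one,
      ofReal_zero, add_mul, ite_mul, one_mul, zero_mul, sum_add_distrib, sum_ite_mem,
      sum_ite_eq', mem_insert_self, if_true, inter_eq_right.mpr (subset_insert v S)] at hvτ ⊢
    linear_combination hvτ
  obtain ⟨G, hG, hG₁, hGμ⟩ := exists_isFiniteBlaschke_eq_one_and_cayley_herglotzSum
    (S := insert v S) (c := c) (forall_mem_insert _ _ _ |>.mpr ⟨hv, hS⟩)
    (fun p hp ↦ by rcases mem_insert.mp hp with rfl | hp <;> simp [c, *] <;> positivity)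
  refine ⟨G, hG, fun p hp ↦ hG₁ p (mem_insert_of_mem hp), ?_⟩
  rw [hGμ μ hμ (by simp [hvμ.symm, hμS]), hF, hτw]

theorem exists_isFiniteBlaschke_eq_on_finset (S : Finset ℂ) (hS : ∀ p ∈ S, ‖p‖ = 1) (f : ℂ → ℂ)
    (hf : ∀ p ∈ S, ‖f p‖ = 1) : ∃ B, IsFiniteBlaschke B ∧ ∀ p ∈ S, B p = f p := by
  induction S using Finset.induction_on with
  | empty => exact ⟨_, IsFiniteBlaschke.const norm_one, by simp⟩
  | insert μ S hμS ih =>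
    rw [forall_mem_insert] at hS hf
    obtain ⟨B, hB, hBf⟩ := ih hS.2 hf.2
    have hBμ : ‖B μ‖ = 1 := hB.norm_eq_one hS.1
    obtain ⟨G, hG, hG₁, hGμ⟩ := exists_isFiniteBlaschke_eq_one_and_eq hS.2 hS.1 hμS
      (w := f μ / B μ) (by rw [norm_div, hf.1, hBμ, div_one])
    refine ⟨_, hB.mul hG, forall_mem_insert _ _ _ |>.mpr ⟨?_, fun p hp ↦ ?_⟩⟩
    · simp only [hGμ]
      exact mul_div_cancel₀ _ (norm_ne_zero_iff.mp (by rw [hBμ]; exact one_ne_zero))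
    · simp only [hG₁ p hp, mul_one, hBf p hp]

/-- Cantor–Phelps interpolation: given points `z j` on the circle and distinct points
`μ j` on the circle, there is a finite Blaschke product `B` with `B (μ j) = z j`. -/
theorem cantor_phelps_interpolation (n : ℕ) (z μ : Fin n → ℂ)
    (hz : ∀ j, ‖z j‖ = 1) (hμ : ∀ j, ‖μ j‖ = 1)
    (hdist : Function.Injective μ) :
    ∃ B : ℂ → ℂ, IsFiniteBlaschke B ∧ ∀ j, B (μ j) = z j := by
  obtain ⟨B, hB, hBz⟩ := exists_isFiniteBlaschke_eq_on_finset (univ.image μ) (by simpa using hμ)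
    (Function.extend μ z 1) (by simpa [hdist.extend_apply] using hz)
  exact ⟨B, hB, fun j ↦ by
    simpa [hdist.extend_apply] using hBz (μ j) (mem_image_of_mem μ (mem_univ j))⟩
end

section
/- Every point (x₁, x₂, x₃) of the distinguished boundary of the tetrablock that is not triangular (i.e., x₁x₂ ≠ x₃) is of the form T_{v,χ}(0,0,1) for some selection ξ₁, ξ₂ ∈ 𝕋, z₁, z₂ ∈ 𝔻; explicitly, taking z₁ = −x₁x̄₃, z₂ = 0, ξ₁ = x₃, ξ₂ = 1 gives T_{v,χ}(0,0,1) = (x₁, x̄₁x₃, x₃) = (x₁, x₂, x₃). -/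
/-!
Since `|x₃| = 1`, the boundary relation `x₁ = x̄₂ x₃` is equivalent to `x₂ = x̄₁ x₃`, so
`x₁ x₂ = |x₁|² x₃`; non-triangularity therefore forces `|x₁| < 1`. With `ξ₂ = 1` and `z₂ = 0` the
automorphism sends `(0,0,1)` to `(-ξ₁ z₁, -z̄₁, ξ₁)`, and `ξ₁ = x₃`, `z₁ = -x₁ x̄₃` hit `(x₁, x₂, x₃)`.
-/

open Complex ComplexConjugate

namespace Tetrablock

/-- `T_{v,χ}(0,0,1)` for `v = -ξ₁ B_{z₁}` and `χ = -ξ₂ B_{-z̄₂}`. -/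
noncomputable def orbitPoint (ξ₁ ξ₂ z₁ z₂ : ℂ) : ℂ × ℂ × ℂ :=
  (-ξ₁ * (z₁ + ξ₂ * conj z₂) / (1 + ξ₂ * conj z₁ * conj z₂),
    -(conj z₁ * ξ₂ + z₂) / (1 + ξ₂ * conj z₁ * conj z₂),
    ξ₁ * conj ξ₂ * (1 + z₁ * z₂ * conj ξ₂) / (1 + ξ₂ * conj z₁ * conj z₂))

theorem orbitPoint_one_zero (ξ z : ℂ) : orbitPoint ξ 1 z 0 = (-ξ * z, -conj z, ξ) := by
  simp [orbitPoint]

end Tetrablock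

theorem mul_conj_eq_one_of_norm_eq_one {u : ℂ} (hu : ‖u‖ = 1) : u * conj u = 1 := by
  rw [mul_conj', hu]
  norm_num

theorem eq_conj_mul_of_eq_conj_mul {a b u : ℂ} (hu : ‖u‖ = 1) (h : a = conj b * u) :
    b = conj a * u := by
  rw [h, map_mul, conj_conj, mul_assoc, mul_comm (conj u), mul_conj_eq_one_of_norm_eq_one hu,
    mul_one]

theorem norm_lt_one_of_mul_conj_mul_ne {a u : ℂ} (ha : ‖a‖ ≤ 1) (hne : a * (conj a * u) ≠ u) :
    ‖a‖ < 1 := by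
  refine ha.lt_of_ne fun ha_eq => hne ?_
  rw [← mul_assoc, mul_conj_eq_one_of_norm_eq_one ha_eq, one_mul]

/-- Every non-triangular point of the distinguished boundary of the tetrablock is of the
form `T_{v,χ}(0,0,1)` for some `ξ₁, ξ₂ ∈ 𝕋`, `z₁, z₂ ∈ 𝔻`. -/
theorem bE_nontriangular_is_orbit_point (x₁ x₂ x₃ : ℂ)
    (h₁ : ‖x₁‖ ≤ 1) (h₂ : x₁ = starRingEnd ℂ x₂ * x₃)
    (h₃ : ‖x₃‖ = 1) (hnt : x₁ * x₂ ≠ x₃) :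
    ∃ ξ₁ ξ₂ z₁ z₂ : ℂ, ‖ξ₁‖ = 1 ∧ ‖ξ₂‖ = 1 ∧
      ‖z₁‖ < 1 ∧ ‖z₂‖ < 1 ∧
      (-ξ₁ * (z₁ + ξ₂ * starRingEnd ℂ z₂) /
          (1 + ξ₂ * starRingEnd ℂ z₁ * starRingEnd ℂ z₂),
        -(starRingEnd ℂ z₁ * ξ₂ + z₂) /
          (1 + ξ₂ * starRingEnd ℂ z₁ * starRingEnd ℂ z₂),
        ξ₁ * starRingEnd ℂ ξ₂ * (1 + z₁ * z₂ * starRingEnd ℂ ξ₂) /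
          (1 + ξ₂ * starRingEnd ℂ z₁ * starRingEnd ℂ z₂)) = (x₁, x₂, x₃) := by
  have hx₂ : x₂ = conj x₁ * x₃ := eq_conj_mul_of_eq_conj_mul h₃ h₂
  have hx₁ : ‖x₁‖ < 1 := norm_lt_one_of_mul_conj_mul_ne h₁ (hx₂ ▸ hnt)
  refine ⟨x₃, 1, -x₁ * conj x₃, 0, h₃, norm_one, by simpa [h₃] using hx₁, by simp, ?_⟩
  change Tetrablock.orbitPoint x₃ 1 (-x₁ * conj x₃) 0 = _
  rw [Tetrablock.orbitPoint_one_zero, hx₂]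
  have hx₃ := mul_conj_eq_one_of_norm_eq_one h₃
  simp only [Prod.mk.injEq, map_mul, map_neg, conj_conj, and_true]
  exact ⟨by linear_combination x₁ * hx₃, by ring⟩
end
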